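/- Under the assumptions of the normal form at x̄ (a₁(x̄) = 0, the lower (k−1)×(k−1) block of the remaining columns invertible, all other entries of a₂(x̄),...,a_k(x̄) zero), the point (β̄, x̄) with β̄ = (1,0,...,0) is a regular point of ã : S^{k-1} × ℝ^{n-k+1} → ℝ^n (i.e. the differential of ã at (β̄,x̄) is surjective onto ℝ^n) if and only if the (n−k+1)×(n−k+1) Jacobian matrix ∂(a₁^1,...,a₁^{n-k+1})/∂(x₁,...,x_{n-k+1})(x̄) is invertible. -/

import Mathlib

open Metric
open scoped Manifold

set_option maxHeartbeats 2000000 in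
/-- Under the normal form assumptions at `x̄` (first column of `a(x̄)`
zero, other columns supported in the last `k-1` rows with invertible lower
`(k-1)×(k-1)` block), the point `(β̄,x̄)` with `β̄ = (1,0,…,0)` is a regular point of
`ã : S^{k-1} × ℝ^{n-k+1} → ℝ^n` (its manifold differential is surjective) iff the
`(n-k+1)×(n-k+1)` Jacobian `∂(a₁^1,…,a₁^{n-k+1})/∂(x₁,…,x_{n-k+1})(x̄)` is invertible. -/
theorem stmt17 (n k : ℕ) (hk : 2 ≤ k) (hkn : k < n)
    [Fact (Module.finrank ℝ (EuclideanSpace ℝ (Fin k)) = k - 1 + 1)]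
    (a : EuclideanSpace ℝ (Fin (n - k + 1)) → Matrix (Fin n) (Fin k) ℝ)
    (hsmooth : ∀ (j : Fin n) (i : Fin k), ContDiff ℝ (⊤ : ℕ∞) fun x => a x j i)
    (xbar : EuclideanSpace ℝ (Fin (n - k + 1)))
    (hcol1 : ∀ j : Fin n, a xbar j ⟨0, by omega⟩ = 0)
    (hupper : ∀ j : Fin n, (j : ℕ) < n - k + 1 → ∀ i : Fin k, 1 ≤ (i : ℕ) →
      a xbar j i = 0)
    (hblock : IsUnit (((a xbar).submatrix
      (fun s : Fin (k - 1) => (⟨n - k + 1 + s, by omega⟩ : Fin n))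
      (fun t : Fin (k - 1) => (⟨1 + t, by omega⟩ : Fin k))).det))
    (Ftil : sphere (0 : EuclideanSpace ℝ (Fin k)) 1 ×
        EuclideanSpace ℝ (Fin (n - k + 1)) → EuclideanSpace ℝ (Fin n))
    (hFtil : ∀ p j, Ftil p j = ∑ i : Fin k, (p.1 : EuclideanSpace ℝ (Fin k)) i * a p.2 j i)
    (J : Matrix (Fin (n - k + 1)) (Fin (n - k + 1)) ℝ)
    (hJ : ∀ j i : Fin (n - k + 1), J j i =
      fderiv ℝ (fun x => a x ⟨(j : ℕ), by omega⟩ ⟨0, by omega⟩) xbar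
        (EuclideanSpace.single i 1))
    (hβbar : EuclideanSpace.single (⟨0, by omega⟩ : Fin k) (1 : ℝ) ∈
      sphere (0 : EuclideanSpace ℝ (Fin k)) 1) :
    Function.Surjective
      (mfderiv ((𝓡 (k - 1)).prod (𝓘(ℝ, EuclideanSpace ℝ (Fin (n - k + 1)))))
        (𝓘(ℝ, EuclideanSpace ℝ (Fin n))) Ftil
        (⟨EuclideanSpace.single (⟨0, by omega⟩ : Fin k) (1 : ℝ), hβbar⟩, xbar)) ↔
      IsUnit J.det := by
  classical
  set i0 : Fin k := ⟨0, by omega⟩ with hi0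
  set βb : EuclideanSpace ℝ (Fin k) := EuclideanSpace.single i0 1 with hβb
  set q : sphere (0 : EuclideanSpace ℝ (Fin k)) 1 × EuclideanSpace ℝ (Fin (n - k + 1)) :=
    (⟨βb, hβbar⟩, xbar) with hq
  -- derivative of the entries of the first column
  set φ : Fin n → (EuclideanSpace ℝ (Fin (n - k + 1)) →L[ℝ] ℝ) :=
    fun j => fderiv ℝ (fun x => a x j i0) xbar with hφ
  -- the ambient extension F of Ftil
  set G : EuclideanSpace ℝ (Fin k) × EuclideanSpace ℝ (Fin (n - k + 1)) → (Fin n → ℝ) :=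
    fun p j => ∑ i : Fin k, p.1 i * a p.2 j i with hG
  set eY : EuclideanSpace ℝ (Fin n) ≃L[ℝ] (Fin n → ℝ) :=
    PiLp.continuousLinearEquiv 2 ℝ _ with heY
  set F : EuclideanSpace ℝ (Fin k) × EuclideanSpace ℝ (Fin (n - k + 1)) →
      EuclideanSpace ℝ (Fin n) := fun p => eY.symm (G p) with hF
  -- explicit derivative of F at (βb, xbar)
  set Li : Fin k →
      (EuclideanSpace ℝ (Fin k) × EuclideanSpace ℝ (Fin (n - k + 1)) →L[ℝ] ℝ) :=
    fun i => (EuclideanSpace.proj i).comp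
      (ContinuousLinearMap.fst ℝ (EuclideanSpace ℝ (Fin k))
        (EuclideanSpace ℝ (Fin (n - k + 1)))) with hLi
  set Ki : Fin n → Fin k →
      (EuclideanSpace ℝ (Fin k) × EuclideanSpace ℝ (Fin (n - k + 1)) →L[ℝ] ℝ) :=
    fun j i => (fderiv ℝ (fun x => a x j i) xbar).comp
      (ContinuousLinearMap.snd ℝ (EuclideanSpace ℝ (Fin k))
        (EuclideanSpace ℝ (Fin (n - k + 1)))) with hKi
  set Dj : Fin n →
      (EuclideanSpace ℝ (Fin k) × EuclideanSpace ℝ (Fin (n - k + 1)) →L[ℝ] ℝ) :=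
    fun j => ∑ i : Fin k, (βb i • Ki j i + a xbar j i • Li i) with hDj
  set D : EuclideanSpace ℝ (Fin k) × EuclideanSpace ℝ (Fin (n - k + 1)) →L[ℝ]
      EuclideanSpace ℝ (Fin n) :=
    ((eY.symm : (Fin n → ℝ) →L[ℝ] EuclideanSpace ℝ (Fin n)).comp
      (ContinuousLinearMap.pi Dj)) with hD
  have hFd : HasFDerivAt F D (βb, xbar) := by
    have hGd : HasFDerivAt G (ContinuousLinearMap.pi Dj) (βb, xbar) := by
      rw [hasFDerivAt_pi']
      intro j
      have : HasFDerivAt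
          (fun p : EuclideanSpace ℝ (Fin k) × EuclideanSpace ℝ (Fin (n - k + 1)) =>
            ∑ i : Fin k, p.1 i * a p.2 j i) (Dj j) (βb, xbar) := by
        apply HasFDerivAt.fun_sum
        intro i _
        have h1 : HasFDerivAt
            (fun p : EuclideanSpace ℝ (Fin k) × EuclideanSpace ℝ (Fin (n - k + 1)) =>
              p.1 i) (Li i) (βb, xbar) := (Li i).hasFDerivAt
        have h2 : HasFDerivAt
            (fun p : EuclideanSpace ℝ (Fin k) × EuclideanSpace ℝ (Fin (n - k + 1)) =>
              a p.2 j i) (Ki j i) (βb, xbar) := by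
          exact HasFDerivAt.comp
            (x := ((βb, xbar) : EuclideanSpace ℝ (Fin k) ×
              EuclideanSpace ℝ (Fin (n - k + 1))))
            (g := fun x => a x j i)
            (((hsmooth j i).differentiable (by simp) xbar).hasFDerivAt) hasFDerivAt_snd
        exact h1.mul h2
      exact this
    exact (eY.symm.hasFDerivAt).comp _ hGd
  -- coordinate formula for D
  have hDapp : ∀ (u : EuclideanSpace ℝ (Fin k)) (v : EuclideanSpace ℝ (Fin (n - k + 1)))
      (j : Fin n), D (u, v) j = (∑ i : Fin k, u i * a xbar j i) + φ j v := by
    intro u v j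
    have h0 : D (u, v) j = Dj j (u, v) := rfl
    rw [h0, hDj]
    simp only [ContinuousLinearMap.sum_apply, ContinuousLinearMap.add_apply,
      ContinuousLinearMap.smul_apply, smul_eq_mul]
    have hLiv : ∀ i : Fin k, Li i (u, v) = u i := fun i => rfl
    have hKiv : ∀ i : Fin k, Ki j i (u, v) = (fderiv ℝ (fun x => a x j i) xbar) v :=
      fun i => rfl
    simp only [hLiv, hKiv]
    rw [Finset.sum_add_distrib]
    have h1 : ∑ i : Fin k, βb i * (fderiv ℝ (fun x => a x j i) xbar) v = φ j v := by
      rw [hβb]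
      simp only [EuclideanSpace.single_apply, ite_mul, one_mul, zero_mul]
      rw [Finset.sum_ite_eq' Finset.univ i0
        (fun i => (fderiv ℝ (fun x => a x j i) xbar) v)]
      simp [hφ]
    rw [h1]
    have h2 : ∑ i : Fin k, a xbar j i * u i = ∑ i : Fin k, u i * a xbar j i := by
      simp [mul_comm]
    rw [h2, add_comm]
  -- decomposition of a functional through single's
  have hvdec : ∀ (v : EuclideanSpace ℝ (Fin (n - k + 1)))
      (ψ : EuclideanSpace ℝ (Fin (n - k + 1)) →L[ℝ] ℝ),
      ψ v = ∑ i : Fin (n - k + 1), v i * ψ (EuclideanSpace.single i 1) := by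
    intro v ψ
    have hv : ∑ i : Fin (n - k + 1), v i • (EuclideanSpace.single i (1 : ℝ)) = v := by
      have h := (EuclideanSpace.basisFun (Fin (n - k + 1)) ℝ).sum_repr v
      simpa [EuclideanSpace.basisFun_apply, EuclideanSpace.basisFun_repr] using h
    conv_lhs => rw [← hv]
    rw [map_sum]
    simp [smul_eq_mul]
  -- D kills the (βb, 0) direction
  have hDβb : D (βb, 0) = 0 := by
    refine PiLp.ext fun j => ?_
    rw [hDapp βb 0 j]
    simp only [map_zero, add_zero, hβb, EuclideanSpace.single_apply, ite_mul, one_mul,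
      zero_mul]
    rw [Finset.sum_ite_eq' Finset.univ i0 (fun i => a xbar j i)]
    simp [hcol1 j]
  -- the inclusion map
  set ι : sphere (0 : EuclideanSpace ℝ (Fin k)) 1 × EuclideanSpace ℝ (Fin (n - k + 1)) →
      EuclideanSpace ℝ (Fin k) × EuclideanSpace ℝ (Fin (n - k + 1)) :=
    fun p => ((p.1 : EuclideanSpace ℝ (Fin k)), p.2) with hι
  set Dc := mfderiv (𝓡 (k - 1)) 𝓘(ℝ, EuclideanSpace ℝ (Fin k))
    ((↑) : sphere (0 : EuclideanSpace ℝ (Fin k)) 1 → EuclideanSpace ℝ (Fin k)) q.1 with hDc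
  set P : (EuclideanSpace ℝ (Fin (k - 1)) × EuclideanSpace ℝ (Fin (n - k + 1))) →L[ℝ]
      EuclideanSpace ℝ (Fin k) × EuclideanSpace ℝ (Fin (n - k + 1)) :=
    (Dc.comp (ContinuousLinearMap.fst ℝ _ _)).prod (ContinuousLinearMap.snd ℝ _ _) with hP
  have key : mfderiv ((𝓡 (k - 1)).prod (𝓘(ℝ, EuclideanSpace ℝ (Fin (n - k + 1)))))
      (𝓘(ℝ, EuclideanSpace ℝ (Fin n))) Ftil q = D.comp P := by
    have hcoe : MDifferentiableAt (𝓡 (k - 1)) 𝓘(ℝ, EuclideanSpace ℝ (Fin k))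
        ((↑) : sphere (0 : EuclideanSpace ℝ (Fin k)) 1 → EuclideanSpace ℝ (Fin k)) q.1 :=
      (contMDiff_coe_sphere (m := (⊤ : ℕ∞)) q.1).mdifferentiableAt (by simp)
    have hFtilEq : Ftil = F ∘ ι := by
      funext p
      refine PiLp.ext fun j => ?_
      rw [hFtil p j]
      rfl
    have hι_diff : MDifferentiableAt ((𝓡 (k - 1)).prod
        (𝓘(ℝ, EuclideanSpace ℝ (Fin (n - k + 1)))))
        𝓘(ℝ, EuclideanSpace ℝ (Fin k) × EuclideanSpace ℝ (Fin (n - k + 1))) ι q := by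
      rw [modelWithCornersSelf_prod, ← chartedSpaceSelf_prod]
      exact (hcoe.comp q mdifferentiableAt_fst).prodMk mdifferentiableAt_snd
    have hF' : MDifferentiableAt
        𝓘(ℝ, EuclideanSpace ℝ (Fin k) × EuclideanSpace ℝ (Fin (n - k + 1)))
        𝓘(ℝ, EuclideanSpace ℝ (Fin n)) F (ι q) :=
      mdifferentiableAt_iff_differentiableAt.2 hFd.differentiableAt
    rw [hFtilEq, mfderiv_comp q hF' hι_diff]
    congr 1
    · rw [mfderiv_eq_fderiv]
      exact hFd.fderiv
    · rw [modelWithCornersSelf_prod, ← chartedSpaceSelf_prod, hι]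
      have hprod := MDifferentiableAt.mfderiv_prod
        (hcoe.comp q mdifferentiableAt_fst)
        (mdifferentiableAt_snd (I := 𝓡 (k - 1))
          (I' := 𝓘(ℝ, EuclideanSpace ℝ (Fin (n - k + 1))))
          (x := q))
      have hrest : (mfderiv ((𝓡 (k - 1)).prod
            (𝓘(ℝ, EuclideanSpace ℝ (Fin (n - k + 1)))))
            𝓘(ℝ, EuclideanSpace ℝ (Fin k))
            (((↑) : sphere (0 : EuclideanSpace ℝ (Fin k)) 1 → EuclideanSpace ℝ (Fin k))
              ∘ Prod.fst) q).prod
          (mfderiv ((𝓡 (k - 1)).prod (𝓘(ℝ, EuclideanSpace ℝ (Fin (n - k + 1)))))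
            𝓘(ℝ, EuclideanSpace ℝ (Fin (n - k + 1))) Prod.snd q) = P := by
        rw [mfderiv_comp q hcoe mdifferentiableAt_fst, mfderiv_fst, mfderiv_snd]
        rfl
      exact hprod.trans hrest
  -- index embeddings
  have hnn : n - k + 1 + (k - 1) = n := by omega
  set jtop : Fin (n - k + 1) → Fin n := fun jm => ⟨jm, by omega⟩ with hjtop
  set jbot : Fin (k - 1) → Fin n := fun s => ⟨n - k + 1 + s, by omega⟩ with hjbot
  set itail : Fin (k - 1) → Fin k := fun t => ⟨1 + t, by omega⟩ with hitail
  have hφtop : ∀ (v : EuclideanSpace ℝ (Fin (n - k + 1))) (jm : Fin (n - k + 1)),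
      φ (jtop jm) v = Matrix.mulVec J (fun i => v i) jm := by
    intro v jm
    rw [hvdec v (φ (jtop jm))]
    have h1 : ∀ i : Fin (n - k + 1),
        v i * φ (jtop jm) (EuclideanSpace.single i 1) = J jm i * v i := by
      intro i
      rw [hJ jm i]
      exact mul_comm _ _
    rw [Finset.sum_congr rfl fun i _ => h1 i]
    simp [Matrix.mulVec, dotProduct]
  have htop0 : ∀ (u : EuclideanSpace ℝ (Fin k)) (j : Fin n), (j : ℕ) < n - k + 1 →
      ∑ i : Fin k, u i * a xbar j i = 0 := by
    intro u j hj
    apply Finset.sum_eq_zero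
    intro i _
    rcases Nat.eq_zero_or_pos (i : ℕ) with h | h
    · have : i = i0 := Fin.ext (by simpa using h)
      rw [this, hcol1 j, mul_zero]
    · rw [hupper j hj i h, mul_zero]
  have hsplitsum : ∀ f : Fin k → ℝ,
      ∑ i : Fin k, f i = f i0 + ∑ t : Fin (k - 1), f (itail t) := by
    intro f
    rw [← Finset.sum_erase_add Finset.univ f (Finset.mem_univ i0), add_comm]
    congr 1
    apply Finset.sum_bij'
      (i := fun (x : Fin k) (_ : x ∈ Finset.univ.erase i0) =>
        (⟨(x : ℕ) - 1, by have := x.isLt; omega⟩ : Fin (k - 1)))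
      (j := fun (t : Fin (k - 1)) (_ : t ∈ Finset.univ) => itail t)
      (hi := fun x hx => Finset.mem_univ _)
      (hj := fun t ht => by
        refine Finset.mem_erase.2 ⟨?_, Finset.mem_univ _⟩
        intro hcon
        have : (1 + (t : ℕ)) = 0 := by
          simpa [hitail, hi0] using congrArg (fun z : Fin k => (z : ℕ)) hcon
        omega)
      (left_neg := fun x hx => by
        have hx1 : (x : ℕ) ≠ 0 := by
          intro h0
          exact (Finset.mem_erase.1 hx).1 (Fin.ext (by simpa [hi0] using h0))
        exact Fin.ext (by simp [hitail]; omega)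
      )
      (right_neg := fun t ht => Fin.ext (by simp [hitail]))
      (h := fun x hx => by
        have hx1 : (x : ℕ) ≠ 0 := by
          intro h0
          exact (Finset.mem_erase.1 hx).1 (Fin.ext (by simpa [hi0] using h0))
        congr 1
        exact Fin.ext (by simp [hitail]; omega))
  have hbot : ∀ j : Fin n, ¬((j : ℕ) < n - k + 1) → ∃ s : Fin (k - 1), j = jbot s := by
    intro j hj
    exact ⟨⟨(j : ℕ) - (n - k + 1), by have := j.isLt; omega⟩,
      Fin.ext (by simp [hjbot]; omega)⟩
  -- surjectivity through the inclusion is the same as surjectivity of D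
  have hrange : LinearMap.range (Dc.toLinearMap : TangentSpace (𝓡 (k - 1)) q.1 →ₗ[ℝ]
      EuclideanSpace ℝ (Fin k)) = (ℝ ∙ (βb : EuclideanSpace ℝ (Fin k)))ᗮ :=
    by convert range_mfderiv_coe_sphere q.1
  have hsurj_iff : Function.Surjective (⇑(D.comp P)) ↔ Function.Surjective ⇑D := by
    constructor
    · intro h y
      obtain ⟨w, hw⟩ := h y
      exact ⟨P w, hw⟩
    · intro h y
      obtain ⟨⟨u, v⟩, huv⟩ := h y
      set u' : EuclideanSpace ℝ (Fin k) := u - u i0 • βb with hu'def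
      have hu' : u' ∈ (ℝ ∙ (βb : EuclideanSpace ℝ (Fin k)))ᗮ := by
        rw [Submodule.mem_orthogonal_singleton_iff_inner_right]
        have h0 : u' i0 = 0 := by
          simp [hu'def, hβb, EuclideanSpace.single_apply]
        rw [hβb, EuclideanSpace.inner_single_left]
        simpa using h0
      rw [← hrange] at hu'
      obtain ⟨t, ht⟩ := hu'
      refine ⟨(t, v), ?_⟩
      have h1 : (D.comp P) (t, v) = D (u', v) := by
        have : P (t, v) = (u', v) := by
          have hPt : P (t, v) = (Dc t, v) := rfl
          rw [hPt]
          exact Prod.ext ht rfl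
        rw [ContinuousLinearMap.comp_apply, this]
      have h2 : D (u', v) = y := by
        have hsum : (u', v) + u i0 • ((βb, 0) :
            EuclideanSpace ℝ (Fin k) × EuclideanSpace ℝ (Fin (n - k + 1))) = (u, v) := by
          rw [Prod.smul_mk, Prod.mk_add_mk]
          refine Prod.ext ?_ ?_
          · simp [hu'def]
          · simp
        have := congrArg (⇑D) hsum
        rw [map_add, map_smul, hDβb, smul_zero, add_zero] at this
        rw [this, huv]
      rw [h1, h2]
  have hfinal : Function.Surjective ⇑D ↔ IsUnit J.det := by
    constructor
    · -- from surjectivity of D to invertibility of the Jacobian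
      intro hsurj
      rw [← Matrix.isUnit_iff_isUnit_det, ← Matrix.mulVec_surjective_iff_isUnit]
      intro w
      set y : EuclideanSpace ℝ (Fin n) := (WithLp.equiv 2 (Fin n → ℝ)).symm
        (fun j => if h : (j : ℕ) < n - k + 1 then w ⟨j, h⟩ else 0) with hy
      obtain ⟨⟨u, v⟩, huv⟩ := hsurj y
      refine ⟨fun i => v i, ?_⟩
      funext jm
      have hcoord : D (u, v) (jtop jm) = y (jtop jm) := by rw [huv]
      rw [hDapp, htop0 u (jtop jm) jm.isLt, zero_add,
        hφtop] at hcoord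
      rw [hcoord]
      have hlt : ((jtop jm : Fin n) : ℕ) < n - k + 1 := jm.isLt
      rw [hy, WithLp.equiv_symm_apply, PiLp.toLp_apply, dif_pos hlt]
    · -- from invertibility of the Jacobian to surjectivity of D
      intro hJu
      intro y
      have hJsurj : Function.Surjective (Matrix.mulVec J) :=
        Matrix.mulVec_surjective_iff_isUnit.2 ((Matrix.isUnit_iff_isUnit_det J).2 hJu)
      obtain ⟨vf, hvf⟩ := hJsurj (fun jm => y (jtop jm))
      set v : EuclideanSpace ℝ (Fin (n - k + 1)) :=
        (WithLp.equiv 2 (Fin (n - k + 1) → ℝ)).symm vf with hv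
      have hBsurj : Function.Surjective (Matrix.mulVec ((a xbar).submatrix
          (fun s : Fin (k - 1) => (⟨n - k + 1 + s, by omega⟩ : Fin n))
          (fun t : Fin (k - 1) => (⟨1 + t, by omega⟩ : Fin k)))) :=
        Matrix.mulVec_surjective_iff_isUnit.2 ((Matrix.isUnit_iff_isUnit_det _).2 hblock)
      obtain ⟨wf, hwf⟩ := hBsurj (fun s => y (jbot s) - φ (jbot s) v)
      set u : EuclideanSpace ℝ (Fin k) := (WithLp.equiv 2 (Fin k → ℝ)).symm
        (fun i => if h : 1 ≤ (i : ℕ) then wf ⟨(i : ℕ) - 1, by have := i.isLt; omega⟩ else 0)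
        with hu
      refine ⟨(u, v), ?_⟩
      refine PiLp.ext fun j => ?_
      rw [hDapp]
      by_cases hj : (j : ℕ) < n - k + 1
      · rw [htop0 u j hj, zero_add]
        have hjeq : j = jtop ⟨(j : ℕ), hj⟩ := Fin.ext rfl
        rw [hjeq, hφtop]
        have hveq : (fun i => v i) = vf := rfl
        rw [hveq, hvf]
      · obtain ⟨s, rfl⟩ := hbot j hj
        rw [hsplitsum (fun i => u i * a xbar (jbot s) i)]
        have hu0 : u i0 = 0 := by
          have h0 : ((i0 : Fin k) : ℕ) = 0 := rfl
          rw [hu, WithLp.equiv_symm_apply, PiLp.toLp_apply, dif_neg (by omega)]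
        have hut : ∀ t : Fin (k - 1), u (itail t) = wf t := by
          intro t
          have h1 : (1 : ℕ) ≤ ((itail t : Fin k) : ℕ) := by simp [hitail]
          simp only [hu]
          rw [WithLp.equiv_symm_apply, PiLp.toLp_apply]
          rw [dif_pos h1]
          congr 1
          exact Fin.ext (by simp [hitail])
        have hwfs : ∑ t : Fin (k - 1), a xbar (jbot s) (itail t) * wf t
            = y (jbot s) - φ (jbot s) v := by
          have := congrFun hwf s
          simpa [Matrix.mulVec, dotProduct, Matrix.submatrix_apply, hjbot, hitail]
            using this
        rw [hu0, zero_mul, zero_add]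
        have : ∑ t : Fin (k - 1), u (itail t) * a xbar (jbot s) (itail t)
            = y (jbot s) - φ (jbot s) v := by
          rw [← hwfs]
          exact Finset.sum_congr rfl fun t _ => by rw [hut t, mul_comm]
        rw [this]
        ring
  rw [show (mfderiv ((𝓡 (k - 1)).prod (𝓘(ℝ, EuclideanSpace ℝ (Fin (n - k + 1)))))
      (𝓘(ℝ, EuclideanSpace ℝ (Fin n))) Ftil
      (⟨EuclideanSpace.single (⟨0, by omega⟩ : Fin k) (1 : ℝ), hβbar⟩, xbar)) = D.comp P
    from key]
  exact hsurj_iff.trans hfinal
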